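/- arXiv:2605.24360 — 5 statements merged into one kernel-verified Lean document; each statement's English description precedes it below -/
import Mathlib

section
/- Let T be a linear subspace of H_A ⊗ H_B such that every vector of T is a product vector. Then either there exists a ∈ H_A such that every element of T has the form a ⊗ y for some y ∈ H_B, or there exists b ∈ H_B such that every element of T has the form x ⊗ b for some x ∈ H_A. Consequently, dim T ≤ max(dim H_A, dim H_B). -/
open scoped TensorProduct

section Aux
variable {V W : Type*} [AddCommGroup V] [Module ℂ V] [AddCommGroup W] [Module ℂ W]

/-- If `a ∉ span {x}`, there is a functional vanishing on `x` with value `1` at `a`. -/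
lemma exists_dual_of_not_mem_span (x a : V) (h : a ∉ Submodule.span ℂ {x}) :
    ∃ f : V →ₗ[ℂ] ℂ, f a = 1 ∧ f x = 0 := by
  set W' := Submodule.span ℂ {x}
  have hmk : (W'.mkQ) a ≠ 0 := by
    simpa [Submodule.Quotient.mk_eq_zero] using h
  have := (Module.forall_dual_apply_eq_zero_iff ℂ (W'.mkQ a)).not
  obtain ⟨g, hg⟩ : ∃ g : Module.Dual ℂ (V ⧸ W'), g (W'.mkQ a) ≠ 0 := by
    by_contra hcon
    push_neg at hcon
    exact hmk ((Module.forall_dual_apply_eq_zero_iff ℂ _).mp hcon)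
  refine ⟨(g (W'.mkQ a))⁻¹ • (g.comp W'.mkQ), ?_, ?_⟩
  · simp only [LinearMap.smul_apply, LinearMap.comp_apply, smul_eq_mul]
    exact inv_mul_cancel₀ hg
  · have hx : W'.mkQ x = 0 := by
      simp [Submodule.Quotient.mk_eq_zero, W', Submodule.mem_span_singleton_self]
    simp [LinearMap.smul_apply, hx]

lemma not_mem_span_symm {a x : V} (ha : a ≠ 0) (hx : x ∉ Submodule.span ℂ {a}) :
    a ∉ Submodule.span ℂ {x} := by
  rw [Submodule.mem_span_singleton]
  rintro ⟨c, rfl⟩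
  have hc : c ≠ 0 := by rintro rfl; simp at ha
  exact hx (Submodule.mem_span_singleton.mpr ⟨c⁻¹, by simp [smul_smul, inv_mul_cancel₀ hc]⟩)

/-- The key rank-one lemma: a sum of two "independent" simple tensors is not simple. -/
lemma sum_tmul_ne (a x : V) (b y : W)
    (ha : a ≠ 0) (hx : x ∉ Submodule.span ℂ {a})
    (hb : b ≠ 0) (hy : y ∉ Submodule.span ℂ {b}) (u : V) (v : W) :
    a ⊗ₜ[ℂ] b + x ⊗ₜ[ℂ] y ≠ u ⊗ₜ[ℂ] v := by
  intro heq
  obtain ⟨f, hfa, hfx⟩ := exists_dual_of_not_mem_span x a (not_mem_span_symm ha hx)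
  obtain ⟨g, hgx, hga⟩ := exists_dual_of_not_mem_span a x hx
  have happly : ∀ (h : V →ₗ[ℂ] ℂ) (p : V) (q : W),
      (TensorProduct.lid ℂ W).toLinearMap.comp (LinearMap.rTensor W h) (p ⊗ₜ[ℂ] q)
        = h p • q := by
    intro h p q
    simp
  have hf := congrArg ((TensorProduct.lid ℂ W).toLinearMap.comp (LinearMap.rTensor W f)) heq
  have hg := congrArg ((TensorProduct.lid ℂ W).toLinearMap.comp (LinearMap.rTensor W g)) heq
  rw [map_add, happly, happly, happly, hfa, hfx] at hf
  rw [map_add, happly, happly, happly, hga, hgx] at hg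
  simp only [one_smul, zero_smul, add_zero, zero_add] at hf hg
  -- hf : b = f u • v, hg : y = g u • v
  have hfu : f u ≠ 0 := by rintro h0; rw [h0, zero_smul] at hf; exact hb hf
  apply hy
  rw [Submodule.mem_span_singleton]
  exact ⟨g u * (f u)⁻¹, by rw [hf, hg, smul_smul, mul_assoc, inv_mul_cancel₀ hfu, mul_one]⟩

end Aux

/-- If every vector of a subspace `T ⊆ H_A ⊗ H_B` is a product vector (a
completely separable subspace), then either all elements of `T` share a common factor on the
`A` side, or all share a common factor on the `B` side; consequently
`dim T ≤ max (dim H_A) (dim H_B)`. -/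
theorem stmt_1 {HA HB : Type*} [AddCommGroup HA] [Module ℂ HA]
    [AddCommGroup HB] [Module ℂ HB] [FiniteDimensional ℂ HA] [FiniteDimensional ℂ HB]
    (T : Submodule ℂ (TensorProduct ℂ HA HB))
    (hT : ∀ ψ ∈ T, ∃ (x : HA) (y : HB), ψ = x ⊗ₜ[ℂ] y) :
    ((∃ a : HA, ∀ ψ ∈ T, ∃ y : HB, ψ = a ⊗ₜ[ℂ] y) ∨
      (∃ b : HB, ∀ ψ ∈ T, ∃ x : HA, ψ = x ⊗ₜ[ℂ] b)) ∧
    Module.finrank ℂ T ≤ max (Module.finrank ℂ HA) (Module.finrank ℂ HB) := by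
  -- Step 1: the disjunction
  have hdisj : (∃ a : HA, ∀ ψ ∈ T, ∃ y : HB, ψ = a ⊗ₜ[ℂ] y) ∨
      (∃ b : HB, ∀ ψ ∈ T, ∃ x : HA, ψ = x ⊗ₜ[ℂ] b) := by
    by_cases h0 : ∀ ψ ∈ T, ψ = 0
    · exact Or.inl ⟨0, fun ψ hψ => ⟨0, by simp [h0 ψ hψ]⟩⟩
    push_neg at h0
    obtain ⟨ψ0, hψ0T, hψ0⟩ := h0
    obtain ⟨a, b, hab⟩ := hT ψ0 hψ0T
    have ha : a ≠ 0 := by rintro rfl; apply hψ0; simp [hab]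
    have hb : b ≠ 0 := by rintro rfl; apply hψ0; simp [hab]
    by_cases hA : ∀ ψ ∈ T, ∃ y : HB, ψ = a ⊗ₜ[ℂ] y
    · exact Or.inl ⟨a, hA⟩
    by_cases hB : ∀ ψ ∈ T, ∃ x : HA, ψ = x ⊗ₜ[ℂ] b
    · exact Or.inr ⟨b, hB⟩
    exfalso
    push_neg at hA hB
    obtain ⟨φ1, hφ1T, hφ1⟩ := hA
    obtain ⟨φ2, hφ2T, hφ2⟩ := hB
    obtain ⟨x1, y1, hxy1⟩ := hT φ1 hφ1T
    obtain ⟨x2, y2, hxy2⟩ := hT φ2 hφ2T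
    -- x1 ∉ span {a}
    have hx1 : x1 ∉ Submodule.span ℂ {a} := by
      intro hmem
      obtain ⟨c, rfl⟩ := Submodule.mem_span_singleton.mp hmem
      exact hφ1 (c • y1) (by rw [hxy1, TensorProduct.smul_tmul])
    have hy1 : y1 ≠ 0 := by rintro rfl; exact hφ1 0 (by simp [hxy1])
    -- y2 ∉ span {b}
    have hy2 : y2 ∉ Submodule.span ℂ {b} := by
      intro hmem
      obtain ⟨c, rfl⟩ := Submodule.mem_span_singleton.mp hmem
      exact hφ2 (c • x2) (by rw [hxy2, TensorProduct.smul_tmul])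
    have hx2 : x2 ≠ 0 := by rintro rfl; exact hφ2 0 (by simp [hxy2])
    -- From ψ0 + φ1 simple: y1 ∈ span {b}
    have hy1span : y1 ∈ Submodule.span ℂ {b} := by
      by_contra hcon
      obtain ⟨u, v, huv⟩ := hT (ψ0 + φ1) (T.add_mem hψ0T hφ1T)
      exact sum_tmul_ne a x1 b y1 ha hx1 hb hcon u v (by rw [← hab, ← hxy1]; exact huv)
    -- From ψ0 + φ2 simple: x2 ∈ span {a}
    have hx2span : x2 ∈ Submodule.span ℂ {a} := by
      by_contra hcon
      obtain ⟨u, v, huv⟩ := hT (ψ0 + φ2) (T.add_mem hψ0T hφ2T)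
      exact sum_tmul_ne a x2 b y2 ha hcon hb hy2 u v (by rw [← hab, ← hxy2]; exact huv)
    obtain ⟨c1, hc1⟩ := Submodule.mem_span_singleton.mp hy1span
    obtain ⟨c2, hc2⟩ := Submodule.mem_span_singleton.mp hx2span
    have hc1ne : c1 ≠ 0 := by rintro rfl; rw [zero_smul] at hc1; exact hy1 hc1.symm
    have hc2ne : c2 ≠ 0 := by rintro rfl; rw [zero_smul] at hc2; exact hx2 hc2.symm
    -- φ1 = (c1 • x1) ⊗ b,  φ2 = a ⊗ (c2 • y2)
    have hφ1eq : φ1 = (c1 • x1) ⊗ₜ[ℂ] b := by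
      rw [hxy1, ← hc1, TensorProduct.smul_tmul]
    have hφ2eq : φ2 = a ⊗ₜ[ℂ] (c2 • y2) := by
      rw [hxy2, ← hc2, TensorProduct.smul_tmul]
    have hx1' : (c1 • x1) ∉ Submodule.span ℂ {a} := by
      intro hmem
      apply hx1
      obtain ⟨d, hd⟩ := Submodule.mem_span_singleton.mp hmem
      exact Submodule.mem_span_singleton.mpr ⟨c1⁻¹ * d, by
        rw [mul_smul, hd, smul_smul, inv_mul_cancel₀ hc1ne, one_smul]⟩
    have hy2' : (c2 • y2) ∉ Submodule.span ℂ {b} := by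
      intro hmem
      apply hy2
      obtain ⟨d, hd⟩ := Submodule.mem_span_singleton.mp hmem
      exact Submodule.mem_span_singleton.mpr ⟨c2⁻¹ * d, by
        rw [mul_smul, hd, smul_smul, inv_mul_cancel₀ hc2ne, one_smul]⟩
    have hx1'ne : (c1 • x1) ≠ 0 := fun h => hx1' (by rw [h]; exact Submodule.zero_mem _)
    have hane : a ∉ Submodule.span ℂ {c1 • x1} := not_mem_span_symm ha hx1'
    obtain ⟨u, v, huv⟩ := hT (φ1 + φ2) (T.add_mem hφ1T hφ2T)
    refine sum_tmul_ne (c1 • x1) a b (c2 • y2) hx1'ne hane hb hy2' u v ?_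
    rw [← hφ1eq, ← hφ2eq]; exact huv
  refine ⟨hdisj, ?_⟩
  -- Step 2: the dimension bound
  rcases hdisj with ⟨a, hA⟩ | ⟨b, hB⟩
  · by_cases ha : a = 0
    · have hbot : T = ⊥ := by
        rw [Submodule.eq_bot_iff]
        intro ψ hψ
        obtain ⟨y, hy⟩ := hA ψ hψ
        rw [hy, ha, TensorProduct.zero_tmul]
      rw [hbot]
      simp
    · obtain ⟨f, hfa, -⟩ := exists_dual_of_not_mem_span (0 : HA) a (by simpa using ha)
      set Φ : TensorProduct ℂ HA HB →ₗ[ℂ] HB :=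
        (TensorProduct.lid ℂ HB).toLinearMap.comp (LinearMap.rTensor HB f)
      have hinj : Function.Injective (Φ.comp T.subtype) := by
        rw [← LinearMap.ker_eq_bot, Submodule.eq_bot_iff]
        rintro ⟨ψ, hψ⟩ hker
        obtain ⟨y, rfl⟩ := hA ψ hψ
        have : Φ (a ⊗ₜ[ℂ] y) = 0 := hker
        have hy : y = 0 := by simpa [Φ, hfa] using this
        simp [hy]
      calc Module.finrank ℂ T ≤ Module.finrank ℂ HB :=
            LinearMap.finrank_le_finrank_of_injective hinj
        _ ≤ max (Module.finrank ℂ HA) (Module.finrank ℂ HB) := le_max_right _ _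
  · by_cases hb : b = 0
    · have hbot : T = ⊥ := by
        rw [Submodule.eq_bot_iff]
        intro ψ hψ
        obtain ⟨x, hx⟩ := hB ψ hψ
        rw [hx, hb, TensorProduct.tmul_zero]
      rw [hbot]
      simp
    · obtain ⟨g, hgb, -⟩ := exists_dual_of_not_mem_span (0 : HB) b (by simpa using hb)
      set Φ : TensorProduct ℂ HA HB →ₗ[ℂ] HA :=
        (TensorProduct.rid ℂ HA).toLinearMap.comp (LinearMap.lTensor HA g)
      have hinj : Function.Injective (Φ.comp T.subtype) := by
        rw [← LinearMap.ker_eq_bot, Submodule.eq_bot_iff]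
        rintro ⟨ψ, hψ⟩ hker
        obtain ⟨x, rfl⟩ := hB ψ hψ
        have : Φ (x ⊗ₜ[ℂ] b) = 0 := hker
        have hx : x = 0 := by simpa [Φ, hgb] using this
        simp [hx]
      calc Module.finrank ℂ T ≤ Module.finrank ℂ HA :=
            LinearMap.finrank_le_finrank_of_injective hinj
        _ ≤ max (Module.finrank ℂ HA) (Module.finrank ℂ HB) := le_max_left _ _
end

section
/- Let A be a self-adjoint operator on H = H_A ⊗ H_B, let λmax(A) be its largest eigenvalue with eigenspace E_max(A), and let α = sup { Tr(σ A) : σ a separable density operator on H }. Then α < λmax(A) if and only if E_max(A) contains no nonzero product vector. Equivalently, the operator W = α·I − A satisfies Tr(Wσ) ≥ 0 for all separable density operators σ and Tr(Wρ) < 0 for some density operator ρ, if and only if E_max(A) is completely entangled. -/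
open scoped ComplexInnerProductSpace
noncomputable section

/-- `HSp n` models a complex inner product space of dimension `n`. -/
abbrev HSp (n : ℕ) := EuclideanSpace ℂ (Fin n)

/-- `HT m n` models the tensor product `HSp m ⊗ HSp n`, with its induced inner product. -/
abbrev HT (m n : ℕ) := EuclideanSpace ℂ (Fin m × Fin n)

/-- The product (tensor) vector `a ⊗ b`. -/
def tmul {m n : ℕ} (a : HSp m) (b : HSp n) : HT m n :=
  (WithLp.equiv 2 _).symm fun p => a p.1 * b p.2

/-- `ψ` is a product vector. -/
def IsProd {m n : ℕ} (ψ : HT m n) : Prop := ∃ a b, ψ = tmul a b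

/-- The rank-one operator `|ψ⟩⟨ψ| : φ ↦ ⟨ψ, φ⟩ • ψ`; for a unit vector `ψ` this is the
orthogonal projection onto the span of `ψ`. -/
def rankOne {H : Type*} [NormedAddCommGroup H] [InnerProductSpace ℂ H] (ψ : H) :
    H →ₗ[ℂ] H := ((innerSL ℂ ψ).toLinearMap).smulRight ψ

/-- A density operator: positive semidefinite (self-adjoint) with trace one. -/
def IsDensity {H : Type*} [NormedAddCommGroup H] [InnerProductSpace ℂ H]
    [FiniteDimensional ℂ H] (ρ : H →ₗ[ℂ] H) : Prop :=
  LinearMap.IsSymmetric ρ ∧ (∀ x, 0 ≤ (⟪x, ρ x⟫).re) ∧ LinearMap.trace ℂ H ρ = 1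

/-- A separable density operator: a member of the convex hull of the set of rank-one
orthogonal projections onto unit product vectors. -/
def IsSepDensity {m n : ℕ} (σ : HT m n →ₗ[ℂ] HT m n) : Prop :=
  σ ∈ convexHull ℝ
    {P | ∃ (a : HSp m) (b : HSp n), ‖a‖ = 1 ∧ ‖b‖ = 1 ∧ P = rankOne (tmul a b)}

/-- The largest (real) eigenvalue `λmax` of an operator. -/
def lamMax {H : Type*} [NormedAddCommGroup H] [InnerProductSpace ℂ H]
    [FiniteDimensional ℂ H] (M : H →ₗ[ℂ] H) : ℝ :=
  sSup {t : ℝ | Module.End.HasEigenvalue M (t : ℂ)}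

/-- `sup { Tr(σ M) : σ a separable density operator }`. -/
def sepSup {m n : ℕ} (M : HT m n →ₗ[ℂ] HT m n) : ℝ :=
  sSup {t : ℝ | ∃ σ, IsSepDensity σ ∧ t = (LinearMap.trace ℂ _ (σ ∘ₗ M)).re}

/-!
Expanding the trace in an eigenbasis of `A` gives `Re Tr(ρA) ≤ λmax(A)` for every density
operator `ρ`; in particular `Re ⟪x, Ax⟫ ≤ λmax(A)` for unit `x`, and a unit `x` attaining this
bound maximizes the Rayleigh quotient, hence lies in `E_max(A)`. Separable states form the
convex hull of the product projections, so `sepSup A` is the maximum of `Re ⟪a ⊗ b, A (a ⊗ b)⟫`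
over unit `a, b`, attained by compactness of the product of spheres. Thus `sepSup A = λmax(A)`
exactly when some unit product vector lies in `E_max(A)`. The operator `W = sepSup A · I - A` is
always nonnegative on separable states, and on the projection `ρ` onto a top eigenvector
`Re Tr(ρW) = sepSup A - λmax(A)`.
-/

section Spectral

variable {H : Type*} [NormedAddCommGroup H] [InnerProductSpace ℂ H]

lemma rankOne_apply (ψ x : H) : rankOne ψ x = ⟪ψ, x⟫ • ψ := rfl

lemma re_inner_rankOne_self_nonneg (ψ x : H) : 0 ≤ (⟪x, rankOne ψ x⟫).re := by
  rw [rankOne_apply, inner_smul_right, ← inner_conj_symm, Complex.conj_mul']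
  norm_cast
  positivity

lemma re_trace_comp_smul_id_sub (σ M : H →ₗ[ℂ] H) (c : ℝ) :
    (LinearMap.trace ℂ H (σ ∘ₗ (c • LinearMap.id - M))).re =
      c * (LinearMap.trace ℂ H σ).re - (LinearMap.trace ℂ H (σ ∘ₗ M)).re := by
  simp [LinearMap.comp_sub, LinearMap.comp_smul]

lemma re_inner_apply_self_of_mem_eigenspace {A : H →ₗ[ℂ] H} {t : ℝ} {x : H}
    (hx : x ∈ Module.End.eigenspace A (t : ℂ)) : (⟪x, A x⟫).re = t * ‖x‖ ^ 2 := by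
  simp [Module.End.mem_eigenspace_iff.mp hx, inner_self_eq_norm_sq_to_K, ← Complex.ofReal_pow]

variable [FiniteDimensional ℂ H]

lemma trace_rankOne_comp (ψ : H) (M : H →ₗ[ℂ] H) :
    LinearMap.trace ℂ H (rankOne ψ ∘ₗ M) = ⟪ψ, M ψ⟫ := by
  change LinearMap.trace ℂ H (((innerSL ℂ ψ).toLinearMap ∘ₗ M).smulRight ψ) = _
  rw [LinearMap.trace_smulRight]
  rfl

lemma trace_rankOne (ψ : H) : LinearMap.trace ℂ H (rankOne ψ) = (‖ψ‖ ^ 2 : ℝ) := by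
  simpa [inner_self_eq_norm_sq_to_K] using trace_rankOne_comp ψ LinearMap.id

lemma isDensity_rankOne {ψ : H} (hψ : ‖ψ‖ = 1) : IsDensity (rankOne ψ) := by
  refine ⟨fun x y => ?_, re_inner_rankOne_self_nonneg ψ, by simp [trace_rankOne, hψ]⟩
  simp only [rankOne_apply, inner_smul_left, inner_smul_right, inner_conj_symm]
  ring

variable [Nontrivial H] {A : H →ₗ[ℂ] H}

lemma LinearMap.IsSymmetric.lamMax_eq_eigenvalues_zero (hA : A.IsSymmetric) :
    lamMax A = hA.eigenvalues rfl ⟨0, Module.finrank_pos⟩ := by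
  refine IsGreatest.csSup_eq ⟨hA.hasEigenvalue_eigenvalues rfl _, fun t ht => ?_⟩
  obtain ⟨i, hi⟩ := hA.exists_eigenvalues_eq rfl ht
  rw [← Complex.ofReal_injective hi]
  exact hA.eigenvalues_antitone rfl (Nat.zero_le i.val)

lemma LinearMap.IsSymmetric.hasEigenvalue_lamMax (hA : A.IsSymmetric) :
    Module.End.HasEigenvalue A (lamMax A : ℂ) := by
  rw [hA.lamMax_eq_eigenvalues_zero]
  exact hA.hasEigenvalue_eigenvalues rfl _

lemma LinearMap.IsSymmetric.re_trace_comp_le_lamMax_mul (hA : A.IsSymmetric) {ρ : H →ₗ[ℂ] H}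
    (hρ : ∀ x, 0 ≤ (⟪x, ρ x⟫).re) :
    (LinearMap.trace ℂ H (ρ ∘ₗ A)).re ≤ lamMax A * (LinearMap.trace ℂ H ρ).re := by
  let b := hA.eigenvectorBasis rfl
  have hρA : (LinearMap.trace ℂ H (ρ ∘ₗ A)).re =
      ∑ i, hA.eigenvalues rfl i * (⟪b i, ρ (b i)⟫).re := by
    rw [LinearMap.trace_eq_sum_inner _ b, Complex.re_sum]
    refine Finset.sum_congr rfl fun i _ => ?_
    rw [LinearMap.comp_apply, hA.apply_eigenvectorBasis, map_smul, inner_smul_right]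
    exact Complex.re_ofReal_mul _ _
  rw [hρA, LinearMap.trace_eq_sum_inner _ b, Complex.re_sum, Finset.mul_sum,
    hA.lamMax_eq_eigenvalues_zero]
  gcongr with i
  · exact hρ _
  · exact hA.eigenvalues_antitone rfl (Nat.zero_le i.val)

lemma LinearMap.IsSymmetric.re_inner_le_lamMax_mul_norm_sq (hA : A.IsSymmetric) (x : H) :
    (⟪x, A x⟫).re ≤ lamMax A * ‖x‖ ^ 2 := by
  simpa [trace_rankOne_comp, trace_rankOne, ← Complex.ofReal_pow] using
    hA.re_trace_comp_le_lamMax_mul (re_inner_rankOne_self_nonneg x)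

lemma LinearMap.IsSymmetric.mem_eigenspace_lamMax_of_re_inner_eq (hA : A.IsSymmetric) {x : H}
    (hx : (⟪x, A x⟫).re = lamMax A * ‖x‖ ^ 2) :
    x ∈ Module.End.eigenspace A (lamMax A : ℂ) := by
  rcases eq_or_ne x 0 with rfl | hx0
  · exact zero_mem _
  have hmax : IsMaxOn hA.toSelfAdjoint.val.reApplyInnerSelf (Metric.sphere 0 ‖x‖) x := by
    intro y hy
    change (⟪A y, y⟫).re ≤ (⟪A x, x⟫).re
    rw [hA y y, hA x x, hx, ← mem_sphere_zero_iff_norm.mp hy]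
    exact hA.re_inner_le_lamMax_mul_norm_sq y
  have heig := hA.toSelfAdjoint.prop.eq_smul_self_of_isLocalExtrOn (Or.inr hmax.localize)
  have hq : hA.toSelfAdjoint.val.rayleighQuotient x = lamMax A := by
    change (⟪A x, x⟫).re / ‖x‖ ^ 2 = lamMax A
    rw [hA x x, hx, mul_div_cancel_right₀ _ (by positivity)]
  rw [hq] at heig
  exact Module.End.mem_eigenspace_iff.mpr heig

end Spectral

section Tensor

variable {m n : ℕ}

lemma tmul_apply (a : HSp m) (b : HSp n) (p : Fin m × Fin n) : tmul a b p = a p.1 * b p.2 := rfl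

lemma norm_tmul (a : HSp m) (b : HSp n) : ‖tmul a b‖ = ‖a‖ * ‖b‖ := by
  simp only [EuclideanSpace.norm_eq, tmul_apply, norm_mul, mul_pow, Fintype.sum_prod_type,
    ← Finset.sum_mul_sum]
  exact Real.sqrt_mul (by positivity) _

lemma tmul_smul_smul (r s : ℝ) (a : HSp m) (b : HSp n) :
    tmul (r • a) (s • b) = (r * s) • tmul a b := by
  ext p
  simp only [tmul_apply, PiLp.smul_apply, Complex.real_smul, Complex.ofReal_mul]
  ring

lemma continuous_tmul : Continuous fun x : HSp m × HSp n => tmul x.1 x.2 := by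
  refine (PiLp.continuous_toLp 2 _).comp (continuous_pi fun p => ?_)
  fun_prop

lemma exists_norm_eq_one (hm : 0 < m) : ∃ a : HSp m, ‖a‖ = 1 :=
  have : Nonempty (Fin m) := ⟨⟨0, hm⟩⟩
  exists_norm_eq _ zero_le_one

lemma IsProd.exists_tmul_eq_normalize {ψ : HT m n} (hψ : IsProd ψ) (h0 : ψ ≠ 0) :
    ∃ (a : HSp m) (b : HSp n), ‖a‖ = 1 ∧ ‖b‖ = 1 ∧ tmul a b = ‖ψ‖⁻¹ • ψ := by
  obtain ⟨a, b, rfl⟩ := hψ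
  have ha : ‖a‖ ≠ 0 := left_ne_zero_of_mul (norm_tmul a b ▸ norm_ne_zero_iff.mpr h0)
  have hb : ‖b‖ ≠ 0 := right_ne_zero_of_mul (norm_tmul a b ▸ norm_ne_zero_iff.mpr h0)
  refine ⟨‖a‖⁻¹ • a, ‖b‖⁻¹ • b, ?_, ?_, ?_⟩
  · rw [norm_smul, norm_inv, norm_norm, inv_mul_cancel₀ ha]
  · rw [norm_smul, norm_inv, norm_norm, inv_mul_cancel₀ hb]
  · rw [tmul_smul_smul, norm_tmul, mul_inv]

def sepValues (M : HT m n →ₗ[ℂ] HT m n) : Set ℝ :=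
  {t : ℝ | ∃ σ, IsSepDensity σ ∧ t = (LinearMap.trace ℂ _ (σ ∘ₗ M)).re}

lemma isSepDensity_rankOne_tmul {a : HSp m} {b : HSp n} (ha : ‖a‖ = 1) (hb : ‖b‖ = 1) :
    IsSepDensity (rankOne (tmul a b)) :=
  subset_convexHull ℝ _ ⟨a, b, ha, hb, rfl⟩

lemma re_inner_tmul_mem_sepValues (M : HT m n →ₗ[ℂ] HT m n) {a : HSp m} {b : HSp n}
    (ha : ‖a‖ = 1) (hb : ‖b‖ = 1) : (⟪tmul a b, M (tmul a b)⟫).re ∈ sepValues M :=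
  ⟨_, isSepDensity_rankOne_tmul ha hb, by rw [trace_rankOne_comp]⟩

lemma IsSepDensity.re_trace_comp_le {M : HT m n →ₗ[ℂ] HT m n} {c : ℝ}
    (h : ∀ (a : HSp m) (b : HSp n), ‖a‖ = 1 → ‖b‖ = 1 → (⟪tmul a b, M (tmul a b)⟫).re ≤ c)
    {σ : HT m n →ₗ[ℂ] HT m n} (hσ : IsSepDensity σ) :
    (LinearMap.trace ℂ _ (σ ∘ₗ M)).re ≤ c := by
  have hlin : IsLinearMap ℝ fun σ : HT m n →ₗ[ℂ] HT m n => (LinearMap.trace ℂ _ (σ ∘ₗ M)).re :=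
    ⟨fun σ τ => by simp [LinearMap.add_comp], fun r σ => by simp [LinearMap.smul_comp]⟩
  refine convexHull_min ?_ (convex_halfSpace_le hlin c) hσ
  rintro _ ⟨a, b, ha, hb, rfl⟩
  simpa [trace_rankOne_comp] using h a b ha hb

lemma IsSepDensity.re_trace_eq_one {σ : HT m n →ₗ[ℂ] HT m n} (hσ : IsSepDensity σ) :
    (LinearMap.trace ℂ _ σ).re = 1 := by
  have hlin : IsLinearMap ℝ fun σ : HT m n →ₗ[ℂ] HT m n => (LinearMap.trace ℂ _ σ).re :=
    ⟨fun σ τ => by simp, fun r σ => by simp⟩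
  refine convexHull_min ?_ (convex_hyperplane hlin 1) hσ
  rintro _ ⟨a, b, ha, hb, rfl⟩
  simp [trace_rankOne, norm_tmul, ha, hb]

lemma exists_isGreatest_sepValues (hm : 0 < m) (hn : 0 < n) (M : HT m n →ₗ[ℂ] HT m n) :
    ∃ (a : HSp m) (b : HSp n), ‖a‖ = 1 ∧ ‖b‖ = 1 ∧
      IsGreatest (sepValues M) (⟪tmul a b, M (tmul a b)⟫).re := by
  obtain ⟨a₁, ha₁⟩ := exists_norm_eq_one hm
  obtain ⟨b₁, hb₁⟩ := exists_norm_eq_one hn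
  have hcont : Continuous fun x : HSp m × HSp n => (⟪tmul x.1 x.2, M (tmul x.1 x.2)⟫).re :=
    Complex.continuous_re.comp
      (continuous_tmul.inner (M.continuous_of_finiteDimensional.comp continuous_tmul))
  obtain ⟨⟨a, b⟩, ⟨ha, hb⟩, hmax⟩ := ((isCompact_sphere (0 : HSp m) 1).prod
    (isCompact_sphere (0 : HSp n) 1)).exists_isMaxOn
      ⟨(a₁, b₁), mem_sphere_zero_iff_norm.mpr ha₁, mem_sphere_zero_iff_norm.mpr hb₁⟩
      hcont.continuousOn
  rw [mem_sphere_zero_iff_norm] at ha hb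
  refine ⟨a, b, ha, hb, re_inner_tmul_mem_sepValues M ha hb, ?_⟩
  rintro t ⟨σ, hσ, rfl⟩
  exact hσ.re_trace_comp_le fun a' b' ha' hb' =>
    hmax (a := (a', b')) ⟨mem_sphere_zero_iff_norm.mpr ha', mem_sphere_zero_iff_norm.mpr hb'⟩

end Tensor

section Witness

variable {m n : ℕ} {A : HT m n →ₗ[ℂ] HT m n}

def IsEntanglementWitness (W : HT m n →ₗ[ℂ] HT m n) : Prop :=
  (∀ σ : HT m n →ₗ[ℂ] HT m n, IsSepDensity σ → 0 ≤ (LinearMap.trace ℂ _ (σ ∘ₗ W)).re) ∧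
    ∃ ρ : HT m n →ₗ[ℂ] HT m n, IsDensity ρ ∧ (LinearMap.trace ℂ _ (ρ ∘ₗ W)).re < 0

lemma nontrivial_HT (hm : 0 < m) (hn : 0 < n) : Nontrivial (HT m n) :=
  have : Nonempty (Fin m × Fin n) := ⟨(⟨0, hm⟩, ⟨0, hn⟩)⟩
  inferInstance

theorem sepSup_lt_lamMax_iff (hm : 0 < m) (hn : 0 < n) (hA : A.IsSymmetric) :
    sepSup A < lamMax A ↔
      ∀ ψ ∈ Module.End.eigenspace A (lamMax A : ℂ), ψ ≠ 0 → ¬ IsProd ψ := by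
  have := nontrivial_HT hm hn
  obtain ⟨a₀, b₀, ha₀, hb₀, hmax⟩ := exists_isGreatest_sepValues hm hn A
  have hα : sepSup A = (⟪tmul a₀ b₀, A (tmul a₀ b₀)⟫).re := hmax.csSup_eq
  have hunit : ‖tmul a₀ b₀‖ = 1 := by rw [norm_tmul, ha₀, hb₀, one_mul]
  constructor
  · intro hlt ψ hψ h0 hprod
    obtain ⟨a, b, ha, hb, hab⟩ := hprod.exists_tmul_eq_normalize h0
    have hmem : tmul a b ∈ Module.End.eigenspace A (lamMax A : ℂ) :=
      hab ▸ Submodule.smul_of_tower_mem _ _ hψ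
    have hle := hmax.2 (re_inner_tmul_mem_sepValues A ha hb)
    rw [re_inner_apply_self_of_mem_eigenspace hmem, norm_tmul, ha, hb] at hle
    linarith
  · intro hces
    rw [hα]
    refine lt_of_le_of_ne ?_ fun heq =>
      hces _ (hA.mem_eigenspace_lamMax_of_re_inner_eq ?_) ?_ ⟨a₀, b₀, rfl⟩
    · simpa [hunit] using hA.re_inner_le_lamMax_mul_norm_sq (tmul a₀ b₀)
    · rw [heq, hunit, one_pow, mul_one]
    · exact norm_ne_zero_iff.mp (hunit ▸ one_ne_zero)

theorem isEntanglementWitness_sepSup_smul_id_sub_iff (hm : 0 < m) (hn : 0 < n)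
    (hA : A.IsSymmetric) :
    IsEntanglementWitness (sepSup A • LinearMap.id - A) ↔ sepSup A < lamMax A := by
  have := nontrivial_HT hm hn
  obtain ⟨_, _, _, _, hmax⟩ := exists_isGreatest_sepValues hm hn A
  simp only [IsEntanglementWitness, re_trace_comp_smul_id_sub]
  constructor
  · rintro ⟨-, ρ, ⟨-, hρ, htr⟩, hneg⟩
    have hle := hA.re_trace_comp_le_lamMax_mul hρ
    rw [htr, Complex.one_re, mul_one] at hle hneg
    linarith
  · intro hlt
    refine ⟨fun σ hσ => ?_, ?_⟩
    · rw [hσ.re_trace_eq_one, mul_one, sub_nonneg]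
      exact le_csSup hmax.bddAbove ⟨σ, hσ, rfl⟩
    · obtain ⟨x, hx, hx0⟩ := hA.hasEigenvalue_lamMax.exists_hasEigenvector
      have hψ : ‖(‖x‖⁻¹ • x)‖ = 1 := norm_smul_inv_norm hx0
      refine ⟨rankOne (‖x‖⁻¹ • x), isDensity_rankOne hψ, ?_⟩
      rw [trace_rankOne, trace_rankOne_comp,
        re_inner_apply_self_of_mem_eigenspace (Submodule.smul_of_tower_mem _ _ hx), hψ]
      simpa using hlt

end Witness

/-- For a self-adjoint operator `A` on `H_A ⊗ H_B`, with
`α = sup { Tr(σA) : σ separable }`, one has `α < λmax(A)` iff the eigenspace `E_max(A)` of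
the largest eigenvalue contains no nonzero product vector; equivalently, `W = α·I − A` is
nonnegative on separable density operators and strictly negative on some density operator
iff `E_max(A)` is completely entangled. -/
theorem stmt_2 {dA dB : ℕ} (hdA : 2 ≤ dA) (hdB : 2 ≤ dB)
    (A : HT dA dB →ₗ[ℂ] HT dA dB) (hA : LinearMap.IsSymmetric A) :
    (sepSup A < lamMax A ↔
      ∀ ψ ∈ Module.End.eigenspace A ((lamMax A : ℝ) : ℂ), ψ ≠ 0 → ¬ IsProd ψ) ∧
    (((∀ σ : HT dA dB →ₗ[ℂ] HT dA dB, IsSepDensity σ →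
          0 ≤ (LinearMap.trace ℂ _
            (σ ∘ₗ (sepSup A • (LinearMap.id : HT dA dB →ₗ[ℂ] HT dA dB) - A))).re) ∧
        (∃ ρ : HT dA dB →ₗ[ℂ] HT dA dB, IsDensity ρ ∧
          (LinearMap.trace ℂ _
            (ρ ∘ₗ (sepSup A • (LinearMap.id : HT dA dB →ₗ[ℂ] HT dA dB) - A))).re < 0)) ↔
      ∀ ψ ∈ Module.End.eigenspace A ((lamMax A : ℝ) : ℂ), ψ ≠ 0 → ¬ IsProd ψ) := by
  have hdA' : 0 < dA := by omega
  have hdB' : 0 < dB := by omega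
  have hiff := sepSup_lt_lamMax_iff hdA' hdB' hA
  exact ⟨hiff, (isEntanglementWitness_sepSup_smul_id_sub_iff hdA' hdB' hA).trans hiff⟩
end
end

section
/- Let ψ1, ψ2 be unit vectors in a finite-dimensional complex inner product space H with c = |⟨ψ1, ψ2⟩|² < 1, and let V = span{ψ1, ψ2}. Then { (|⟨ψ1, φ⟩|², |⟨ψ2, φ⟩|²) : φ ∈ V, ‖φ‖ = 1 } = E_c. -/
/-!
Write `g = ⟪ψ1, ψ2⟫`, `p = ⟪ψ1, φ⟫`, `q = ⟪ψ2, φ⟫`. On `span {ψ1, ψ2}` the map `φ ↦ (p, q)` is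
given by the Gram matrix `[[1, g], [conj g, 1]]`, which is invertible because `|g| < 1`, and
inverting it yields `(1 - |g|²) ‖φ‖² = |p|² + |q|² - 2 Re (conj p * g * q)`. For `‖φ‖ = 1` the
inequality defining `E_c` thus becomes `|Re (conj p * g * q)| ≤ |p| |g| |q|`. Conversely, for
`(x1, x2) ∈ E_c` take `p = √x1` and `q = √x2 ζ` with a phase `ζ` for which
`2 Re (conj p * g * q) = x1 + x2 - (1 - c)`, and let `φ` be the preimage of `(p, q)`.
-/

open scoped ComplexInnerProductSpace
noncomputable section

/-- For `c ∈ [0,1]`, the region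
`E_c = {(x1,x2) ∈ [0,1]² : (x1 + x2 − (1 − c))² ≤ 4·c·x1·x2}`. -/
def Ecal (c : ℝ) : Set (ℝ × ℝ) :=
  {x | x.1 ∈ Set.Icc (0 : ℝ) 1 ∧ x.2 ∈ Set.Icc (0 : ℝ) 1 ∧
    (x.1 + x.2 - (1 - c)) ^ 2 ≤ 4 * c * x.1 * x.2}

lemma Complex.exists_norm_eq_one_re_mul_eq {w : ℂ} {r : ℝ} (h : r ^ 2 ≤ ‖w‖ ^ 2) :
    ∃ ζ : ℂ, ‖ζ‖ = 1 ∧ (w * ζ).re = r := by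
  rcases eq_or_ne w 0 with rfl | hw
  · exact ⟨1, norm_one, by simpa [eq_comm] using h⟩
  · set s := √(‖w‖ ^ 2 - r ^ 2)
    have hrs : ‖(r + s * I : ℂ)‖ = ‖w‖ := by
      rw [Complex.norm_add_mul_I, Real.sq_sqrt (by linarith), add_sub_cancel,
        Real.sqrt_sq (norm_nonneg w)]
    refine ⟨(r + s * I) / w, ?_, ?_⟩
    · rw [norm_div, hrs, div_self (norm_ne_zero_iff.mpr hw)]
    · rw [mul_div_cancel₀ _ hw]
      simp

section

variable {H : Type*} [NormedAddCommGroup H] [InnerProductSpace ℂ H] {ψ1 ψ2 : H}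

lemma one_sub_norm_inner_sq_mul_norm_sq_of_mem_span_pair (hψ1 : ‖ψ1‖ = 1)
    (hψ2 : ‖ψ2‖ = 1) {φ : H} (hφ : φ ∈ Submodule.span ℂ {ψ1, ψ2}) :
    (1 - ‖⟪ψ1, ψ2⟫‖ ^ 2) * ‖φ‖ ^ 2 = ‖⟪ψ1, φ⟫‖ ^ 2 + ‖⟪ψ2, φ⟫‖ ^ 2 -
      2 * (starRingEnd ℂ ⟪ψ1, φ⟫ * ⟪ψ1, ψ2⟫ * ⟪ψ2, φ⟫).re := by
  obtain ⟨a, b, rfl⟩ := Submodule.mem_span_pair.mp hφ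
  have hφφ : (‖a • ψ1 + b • ψ2‖ : ℂ) ^ 2 = ⟪a • ψ1 + b • ψ2, a • ψ1 + b • ψ2⟫ := by
    rw [inner_self_eq_norm_sq_to_K]; rfl
  apply Complex.ofReal_injective
  push_cast
  rw [hφφ]
  simp only [← Complex.mul_conj', Complex.re_eq_add_conj, inner_add_left, inner_add_right,
    inner_smul_left, inner_smul_right, inner_self_eq_one_of_norm_eq_one hψ1,
    inner_self_eq_one_of_norm_eq_one hψ2, ← inner_conj_symm ψ2 ψ1, map_add, map_mul,
    Complex.conj_conj, map_one]
  ring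

lemma exists_mem_span_pair_inner_eq (hψ1 : ‖ψ1‖ = 1) (hψ2 : ‖ψ2‖ = 1)
    (h : ‖⟪ψ1, ψ2⟫‖ ^ 2 ≠ 1) (p q : ℂ) :
    ∃ φ ∈ Submodule.span ℂ {ψ1, ψ2}, ⟪ψ1, φ⟫ = p ∧ ⟪ψ2, φ⟫ = q := by
  set g := ⟪ψ1, ψ2⟫
  have hdet : 1 - g * starRingEnd ℂ g ≠ 0 := by
    rw [Complex.mul_conj', sub_ne_zero]
    exact_mod_cast h.symm
  -- the inverse of the Gram matrix `!![1, g; conj g, 1]` applied to `(p, q)`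
  refine ⟨(1 - g * starRingEnd ℂ g)⁻¹ • ((p - g * q) • ψ1 + (q - starRingEnd ℂ g * p) • ψ2),
    Submodule.smul_mem _ _ (Submodule.mem_span_pair.mpr ⟨_, _, rfl⟩), ?_, ?_⟩ <;>
  · simp only [inner_smul_right, inner_add_right, inner_self_eq_one_of_norm_eq_one hψ1,
      inner_self_eq_one_of_norm_eq_one hψ2, ← inner_conj_symm ψ2 ψ1]
    field_simp
    ring

lemma norm_inner_sq_mem_Ecal (hψ1 : ‖ψ1‖ = 1) (hψ2 : ‖ψ2‖ = 1) {φ : H}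
    (hφ : φ ∈ Submodule.span ℂ {ψ1, ψ2}) (hφ1 : ‖φ‖ = 1) :
    (‖⟪ψ1, φ⟫‖ ^ 2, ‖⟪ψ2, φ⟫‖ ^ 2) ∈ Ecal (‖⟪ψ1, ψ2⟫‖ ^ 2) := by
  have hid := one_sub_norm_inner_sq_mul_norm_sq_of_mem_span_pair hψ1 hψ2 hφ
  rw [hφ1, one_pow, mul_one] at hid
  have hle : ∀ ψ : H, ‖ψ‖ = 1 → ‖⟪ψ, φ⟫‖ ^ 2 ≤ 1 := fun ψ hψ ↦
    pow_le_one₀ (norm_nonneg _) ((norm_inner_le_norm ψ φ).trans_eq (by rw [hψ, hφ1, one_mul]))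
  refine ⟨⟨by positivity, hle ψ1 hψ1⟩, ⟨by positivity, hle ψ2 hψ2⟩, ?_⟩
  set w := starRingEnd ℂ ⟪ψ1, φ⟫ * ⟪ψ1, ψ2⟫ * ⟪ψ2, φ⟫
  have hw : ‖w‖ = ‖⟪ψ1, φ⟫‖ * ‖⟪ψ1, ψ2⟫‖ * ‖⟪ψ2, φ⟫‖ := by
    rw [norm_mul, norm_mul, Complex.norm_conj]
  have hre : w.re ^ 2 ≤ ‖w‖ ^ 2 := by
    rw [Complex.sq_norm, sq]
    exact Complex.re_sq_le_normSq w
  dsimp only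
  calc (‖⟪ψ1, φ⟫‖ ^ 2 + ‖⟪ψ2, φ⟫‖ ^ 2 - (1 - ‖⟪ψ1, ψ2⟫‖ ^ 2)) ^ 2
        = 4 * w.re ^ 2 := by rw [hid]; ring
    _ ≤ 4 * ‖w‖ ^ 2 := by gcongr
    _ = _ := by rw [hw]; ring

lemma exists_mem_span_pair_norm_inner_sq_eq (hψ1 : ‖ψ1‖ = 1) (hψ2 : ‖ψ2‖ = 1)
    (h : ‖⟪ψ1, ψ2⟫‖ ^ 2 ≠ 1) {x : ℝ × ℝ} (hx : x ∈ Ecal (‖⟪ψ1, ψ2⟫‖ ^ 2)) :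
    ∃ φ ∈ Submodule.span ℂ {ψ1, ψ2}, ‖φ‖ = 1 ∧ x = (‖⟪ψ1, φ⟫‖ ^ 2, ‖⟪ψ2, φ⟫‖ ^ 2) := by
  obtain ⟨⟨hx1, -⟩, ⟨hx2, -⟩, hE⟩ := hx
  set w : ℂ := 2 * √x.1 * √x.2 * ⟪ψ1, ψ2⟫
  obtain ⟨ζ, hζ, hre⟩ := Complex.exists_norm_eq_one_re_mul_eq
    (w := w) (r := x.1 + x.2 - (1 - ‖⟪ψ1, ψ2⟫‖ ^ 2)) <| by
      simp only [w, norm_mul, Complex.norm_real, Complex.norm_ofNat, Real.norm_eq_abs,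
        mul_pow, sq_abs, Real.sq_sqrt hx1, Real.sq_sqrt hx2]
      linarith
  obtain ⟨φ, hφ, hp, hq⟩ := exists_mem_span_pair_inner_eq hψ1 hψ2 h √x.1 (√x.2 * ζ)
  have hid := one_sub_norm_inner_sq_mul_norm_sq_of_mem_span_pair hψ1 hψ2 hφ
  have hp2 : ‖⟪ψ1, φ⟫‖ ^ 2 = x.1 := by
    rw [hp, Complex.norm_real, Real.norm_eq_abs, sq_abs, Real.sq_sqrt hx1]
  have hq2 : ‖⟪ψ2, φ⟫‖ ^ 2 = x.2 := by
    rw [hq, norm_mul, hζ, mul_one, Complex.norm_real, Real.norm_eq_abs, sq_abs,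
      Real.sq_sqrt hx2]
  have hwζ : w * ζ = (2 : ℝ) * (starRingEnd ℂ ⟪ψ1, φ⟫ * ⟪ψ1, ψ2⟫ * ⟪ψ2, φ⟫) := by
    rw [hp, hq, Complex.conj_ofReal]; push_cast; ring
  rw [hp2, hq2, ← Complex.re_ofReal_mul, ← hwζ, hre] at hid
  have hφ2 : ‖φ‖ ^ 2 = 1 :=
    mul_left_cancel₀ (sub_ne_zero.mpr h.symm) (hid.trans (by ring))
  exact ⟨φ, hφ, (pow_eq_one_iff_of_nonneg (norm_nonneg φ) two_ne_zero).mp hφ2,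
    by rw [hp2, hq2]⟩

end

theorem stmt_12_general {H : Type*} [NormedAddCommGroup H] [InnerProductSpace ℂ H]
    (ψ1 ψ2 : H) (hψ1 : ‖ψ1‖ = 1) (hψ2 : ‖ψ2‖ = 1)
    (c : ℝ) (hc : c = ‖⟪ψ1, ψ2⟫‖ ^ 2) (hc1 : c < 1) :
    {x : ℝ × ℝ | ∃ φ ∈ Submodule.span ℂ {ψ1, ψ2}, ‖φ‖ = 1 ∧
        x = (‖⟪ψ1, φ⟫‖ ^ 2, ‖⟪ψ2, φ⟫‖ ^ 2)} = Ecal c := by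
  subst hc
  ext x
  constructor
  · rintro ⟨φ, hφ, hφ1, rfl⟩
    exact norm_inner_sq_mem_Ecal hψ1 hψ2 hφ hφ1
  · exact exists_mem_span_pair_norm_inner_sq_eq hψ1 hψ2 hc1.ne

/-- For unit vectors `ψ1, ψ2` with `c = |⟨ψ1,ψ2⟩|² < 1` and
`V = span{ψ1, ψ2}`, one has
`{(|⟨ψ1,φ⟩|², |⟨ψ2,φ⟩|²) : φ ∈ V, ‖φ‖ = 1} = E_c`. -/
theorem stmt_12 {H : Type*} [NormedAddCommGroup H] [InnerProductSpace ℂ H]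
    [FiniteDimensional ℂ H]
    (ψ1 ψ2 : H) (hψ1 : ‖ψ1‖ = 1) (hψ2 : ‖ψ2‖ = 1)
    (c : ℝ) (hc : c = ‖⟪ψ1, ψ2⟫‖ ^ 2) (hc1 : c < 1) :
    {x : ℝ × ℝ | ∃ φ ∈ Submodule.span ℂ {ψ1, ψ2}, ‖φ‖ = 1 ∧
        x = (‖⟪ψ1, φ⟫‖ ^ 2, ‖⟪ψ2, φ⟫‖ ^ 2)} = Ecal c :=
  stmt_12_general ψ1 ψ2 hψ1 hψ2 c hc hc1
end
end

section
/- Let a1, a2 ∈ H_A and b1, b2 ∈ H_B be unit vectors with c_A = |⟨a1, a2⟩|² and c_B = |⟨b1, b2⟩|², and set ψ_j = a_j ⊗ b_j. Then for every (x_{1,A}, x_{2,A}) ∈ E_{c_A} and (x_{1,B}, x_{2,B}) ∈ E_{c_B}, there exist unit vectors α ∈ H_A and β ∈ H_B such that |⟨a_j, α⟩|² = x_{j,A} and |⟨b_j, β⟩|² = x_{j,B} for j = 1, 2; consequently the pure product state α ⊗ β satisfies |⟨ψ_j, α ⊗ β⟩|² = x_{j,A}·x_{j,B} for j = 1, 2.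 -/
open scoped ComplexInnerProductSpace
noncomputable section

/-! Take a unit vector `e ⟂ a₁` with `|⟨a₂, e⟩|² = 1 - c` (the normalised component of `a₂`
orthogonal to `a₁`, or any unit vector orthogonal to `a₁` when `a₂ ∥ a₁`), and put
`α = √x₁ a₁ + √(1 - x₁) ω e` with `|ω| = 1`. Then `|⟨a₁, α⟩|² = x₁`, and `⟨a₂, α⟩ = z + w ω` with
`|z|² = c x₁`, `|w|² = (1 - c)(1 - x₁)`. As `ω` runs over the unit circle, `|z + w ω|²` fills
`[(|z| - |w|)², (|z| + |w|)²]`, and `x₂` lies in this interval exactly when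
`(x₁, x₂) ∈ E_c`. Overlaps of product vectors factor, which gives the last two identities. -/

namespace Complex

theorem exists_norm_eq_one_norm_ofReal_add_mul_sq_eq {A B x : ℝ}
    (h : (x - A ^ 2 - B ^ 2) ^ 2 ≤ 4 * A ^ 2 * B ^ 2) :
    ∃ ω : ℂ, ‖ω‖ = 1 ∧ ‖(A : ℂ) + B * ω‖ ^ 2 = x := by
  -- `‖A + B ω‖² = A² + B² + 2AB Re ω`, so take `ω` on the unit circle with real part `k`;
  -- if `AB = 0` then `k = 0` and the hypothesis forces `x = A² + B²`.
  set k := (x - A ^ 2 - B ^ 2) / (2 * A * B)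
  have hk : 2 * A * B * k = x - A ^ 2 - B ^ 2 := by
    rcases eq_or_ne (2 * A * B) 0 with h0 | h0
    · rw [h0, zero_mul]; nlinarith
    · exact mul_div_cancel₀ _ h0
  have hk2 : k ^ 2 ≤ 1 := by
    rcases eq_or_ne (2 * A * B) 0 with h0 | h0
    · simp [k, h0]
    · have hpos : 0 < (2 * A * B) ^ 2 := by positivity
      have : (2 * A * B) ^ 2 * k ^ 2 ≤ (2 * A * B) ^ 2 * 1 := by
        rw [mul_one, ← mul_pow, hk]; exact h.trans_eq (by ring)
      exact le_of_mul_le_mul_left this hpos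
  have hsq : √(1 - k ^ 2) ^ 2 = 1 - k ^ 2 := Real.sq_sqrt (by linarith)
  refine ⟨k + √(1 - k ^ 2) * I, ?_, ?_⟩
  · rw [← pow_eq_one_iff_of_nonneg (norm_nonneg _) two_ne_zero, Complex.sq_norm, normSq_apply]
    simp only [add_re, ofReal_re, mul_re, I_re, ofReal_im, I_im, add_im, mul_im]
    nlinarith
  · rw [Complex.sq_norm, normSq_apply]
    simp only [add_re, ofReal_re, mul_re, I_re, ofReal_im, I_im, add_im, mul_im]
    nlinarith

theorem exists_norm_eq_one_norm_add_mul_sq_eq {z w : ℂ} {x : ℝ}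
    (h : (x - ‖z‖ ^ 2 - ‖w‖ ^ 2) ^ 2 ≤ 4 * ‖z‖ ^ 2 * ‖w‖ ^ 2) :
    ∃ ω : ℂ, ‖ω‖ = 1 ∧ ‖z + w * ω‖ ^ 2 = x := by
  obtain ⟨ω, hω, hx⟩ := exists_norm_eq_one_norm_ofReal_add_mul_sq_eq h
  set u := exp (arg z * I)
  set v := exp (arg w * I)
  have hu : ‖u‖ = 1 := norm_exp_ofReal_mul_I _
  have hv : ‖v‖ = 1 := norm_exp_ofReal_mul_I _
  refine ⟨u * (starRingEnd ℂ v) * ω, by simp [hu, hv, hω], ?_⟩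
  have hvv : v * starRingEnd ℂ v = 1 := by
    rw [mul_conj, normSq_eq_norm_sq, hv]; norm_num
  have : z + w * (u * starRingEnd ℂ v * ω) = u * (‖z‖ + ‖w‖ * ω) := by
    conv_lhs => rw [← norm_mul_exp_arg_mul_I z, ← norm_mul_exp_arg_mul_I w]
    linear_combination (‖w‖ * u * ω : ℂ) * hvv
  rw [this, norm_mul, hu, one_mul, hx]

end Complex

section InnerProductSpace

variable {E : Type*} [NormedAddCommGroup E] [InnerProductSpace ℂ E]

theorem exists_norm_eq_one_inner_eq_zero (hE : 2 ≤ Module.finrank ℂ E) (a : E) :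
    ∃ e : E, ‖e‖ = 1 ∧ ⟪a, e⟫ = 0 := by
  have : FiniteDimensional ℂ E := Module.finite_of_finrank_pos (by omega)
  have hrank := (ℂ ∙ a).finrank_add_finrank_orthogonal
  have hle : Module.finrank ℂ (ℂ ∙ a) ≤ 1 := (finrank_span_le_card {a}).trans (by simp)
  obtain ⟨v, hv, hv0⟩ := Submodule.exists_mem_ne_zero_of_ne_bot (p := (ℂ ∙ a)ᗮ) (by
    intro h
    rw [h, finrank_bot] at hrank
    omega)
  refine ⟨(‖v‖⁻¹ : ℂ) • v, by simp [norm_smul, hv0], ?_⟩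
  rw [inner_smul_right, Submodule.mem_orthogonal_singleton_iff_inner_right.mp hv, mul_zero]

theorem exists_norm_eq_one_inner_eq_zero_norm_inner_eq (hE : 2 ≤ Module.finrank ℂ E)
    {a w : E} (haw : ⟪a, w⟫ = 0) :
    ∃ e : E, ‖e‖ = 1 ∧ ⟪a, e⟫ = 0 ∧ ‖⟪w, e⟫‖ = ‖w‖ := by
  rcases eq_or_ne w 0 with rfl | hw
  · obtain ⟨e, he, hae⟩ := exists_norm_eq_one_inner_eq_zero hE a
    exact ⟨e, he, hae, by simp⟩
  refine ⟨(‖w‖⁻¹ : ℂ) • w, by simp [norm_smul, hw], by rw [inner_smul_right, haw, mul_zero], ?_⟩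
  rw [inner_smul_right, inner_self_eq_norm_sq_to_K, norm_mul, norm_pow]
  simp [hw, sq]

theorem exists_norm_eq_one_inner_eq_zero_norm_inner_sq_eq (hE : 2 ≤ Module.finrank ℂ E)
    {a₁ : E} (ha₁ : ‖a₁‖ = 1) (a₂ : E) :
    ∃ e : E, ‖e‖ = 1 ∧ ⟪a₁, e⟫ = 0 ∧ ‖⟪a₂, e⟫‖ ^ 2 = ‖a₂‖ ^ 2 - ‖⟪a₁, a₂⟫‖ ^ 2 := by
  set w := a₂ - ⟪a₁, a₂⟫ • a₁
  have ha₁' : ⟪a₁, a₁⟫ = 1 := by rw [inner_self_eq_norm_sq_to_K, ha₁]; norm_num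
  have haw : ⟪a₁, w⟫ = 0 := by rw [inner_sub_right, inner_smul_right, ha₁', mul_one, sub_self]
  obtain ⟨e, he, hae, hwe⟩ := exists_norm_eq_one_inner_eq_zero_norm_inner_eq hE haw
  have hdecomp : a₂ = ⟪a₁, a₂⟫ • a₁ + w := by simp [w]
  have hpyth : ‖a₂‖ ^ 2 = ‖⟪a₁, a₂⟫‖ ^ 2 + ‖w‖ ^ 2 := by
    conv_lhs => rw [hdecomp]
    rw [@norm_add_sq ℂ, inner_smul_left, haw, mul_zero, norm_smul, ha₁, mul_one]
    simp
  refine ⟨e, he, hae, ?_⟩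
  rw [hpyth, add_sub_cancel_left, ← hwe, hdecomp, inner_add_left, inner_smul_left, hae,
    mul_zero, zero_add]

theorem exists_norm_eq_one_norm_inner_sq_eq (hE : 2 ≤ Module.finrank ℂ E) {a₁ a₂ : E}
    (ha₁ : ‖a₁‖ = 1) (ha₂ : ‖a₂‖ = 1) {x : ℝ × ℝ} (hx : x ∈ Ecal (‖⟪a₁, a₂⟫‖ ^ 2)) :
    ∃ α : E, ‖α‖ = 1 ∧ ‖⟪a₁, α⟫‖ ^ 2 = x.1 ∧ ‖⟪a₂, α⟫‖ ^ 2 = x.2 := by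
  obtain ⟨⟨hx₁, hx₁'⟩, -, hxE⟩ := hx
  obtain ⟨e, he, hae, ha₂e⟩ := exists_norm_eq_one_inner_eq_zero_norm_inner_sq_eq hE ha₁ a₂
  set p : ℂ := ((√x.1 : ℝ) : ℂ)
  set q : ℂ := ((√(1 - x.1) : ℝ) : ℂ)
  have hp : ‖p‖ ^ 2 = x.1 := by simp [p, Real.sq_sqrt hx₁]
  have hq : ‖q‖ ^ 2 = 1 - x.1 := by simp [q, Real.sq_sqrt (sub_nonneg.2 hx₁')]
  obtain ⟨ω, hω, hωx⟩ := Complex.exists_norm_eq_one_norm_add_mul_sq_eq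
    (z := p * ⟪a₂, a₁⟫) (w := q * ⟪a₂, e⟫) (x := x.2) (by
      rw [norm_mul, norm_mul, mul_pow, mul_pow, hp, hq, ha₂e, ha₂, norm_inner_symm]
      nlinarith)
  refine ⟨p • a₁ + (q * ω) • e, ?_, ?_, ?_⟩
  · rw [← pow_eq_one_iff_of_nonneg (norm_nonneg _) two_ne_zero, @norm_add_sq ℂ,
      inner_smul_left, inner_smul_right, hae]
    simp [norm_smul, ha₁, he, hω, hp, hq]
  · rw [inner_add_right, inner_smul_right, inner_smul_right, hae, inner_self_eq_norm_sq_to_K, ha₁]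
    simpa using hp
  · rw [← hωx, inner_add_right, inner_smul_right, inner_smul_right]
    ring_nf

end InnerProductSpace

theorem inner_tmul {m n : ℕ} (a α : HSp m) (b β : HSp n) :
    ⟪tmul a b, tmul α β⟫ = ⟪a, α⟫ * ⟪b, β⟫ := by
  simp only [tmul, PiLp.inner_apply, RCLike.inner_apply, WithLp.equiv_symm_apply,
    map_mul, Fintype.sum_prod_type, Finset.sum_mul_sum]
  exact Finset.sum_congr rfl fun i _ => Finset.sum_congr rfl fun j _ => by ring

/-- For unit vectors `a1, a2, b1, b2` with local fidelities
`c_A = |⟨a1,a2⟩|²`, `c_B = |⟨b1,b2⟩|²` and `ψj = aj ⊗ bj`: for every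
`(x_{1,A},x_{2,A}) ∈ E_{c_A}` and `(x_{1,B},x_{2,B}) ∈ E_{c_B}` there exist unit vectors
`α, β` with `|⟨aj,α⟩|² = x_{j,A}` and `|⟨bj,β⟩|² = x_{j,B}` for `j = 1,2`; consequently
`|⟨ψj, α ⊗ β⟩|² = x_{j,A}·x_{j,B}` for `j = 1,2`. -/
theorem stmt_14 {dA dB : ℕ} (hdA : 2 ≤ dA) (hdB : 2 ≤ dB)
    (a1 a2 : HSp dA) (b1 b2 : HSp dB)
    (ha1 : ‖a1‖ = 1) (ha2 : ‖a2‖ = 1) (hb1 : ‖b1‖ = 1) (hb2 : ‖b2‖ = 1)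
    (cA cB : ℝ) (hcA : cA = ‖⟪a1, a2⟫‖ ^ 2) (hcB : cB = ‖⟪b1, b2⟫‖ ^ 2) :
    ∀ u ∈ Ecal cA, ∀ v ∈ Ecal cB,
      ∃ (α : HSp dA) (β : HSp dB), ‖α‖ = 1 ∧ ‖β‖ = 1 ∧
        ‖⟪a1, α⟫‖ ^ 2 = u.1 ∧ ‖⟪a2, α⟫‖ ^ 2 = u.2 ∧
        ‖⟪b1, β⟫‖ ^ 2 = v.1 ∧ ‖⟪b2, β⟫‖ ^ 2 = v.2 ∧
        ‖⟪tmul a1 b1, tmul α β⟫‖ ^ 2 = u.1 * v.1 ∧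
        ‖⟪tmul a2 b2, tmul α β⟫‖ ^ 2 = u.2 * v.2 := by
  subst hcA hcB
  intro u hu v hv
  obtain ⟨α, hα, hα₁, hα₂⟩ := exists_norm_eq_one_norm_inner_sq_eq
    (by rwa [finrank_euclideanSpace_fin]) ha1 ha2 hu
  obtain ⟨β, hβ, hβ₁, hβ₂⟩ := exists_norm_eq_one_norm_inner_sq_eq
    (by rwa [finrank_euclideanSpace_fin]) hb1 hb2 hv
  refine ⟨α, β, hα, hβ, hα₁, hα₂, hβ₁, hβ₂, ?_, ?_⟩
  · rw [inner_tmul, norm_mul, mul_pow, hα₁, hβ₁]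
  · rw [inner_tmul, norm_mul, mul_pow, hα₂, hβ₂]
end
end

section
/- Let H_A and H_B be finite-dimensional complex inner product spaces with d_A = dim H_A ≥ 2 and d_B = dim H_B ≥ 2. Then every linear subspace K of H_A ⊗ H_B with dim K ≥ d_A·d_B − 2 contains a nonzero product vector. -/
open scoped TensorProduct
open Module

-- kernel of a functional on a space of dim ≥ 2 contains a nonzero vector
lemma aux_ker {V : Type*} [AddCommGroup V] [Module ℂ V] [FiniteDimensional ℂ V]
    (hV : 2 ≤ finrank ℂ V) (φ : V →ₗ[ℂ] ℂ) : ∃ a : V, a ≠ 0 ∧ φ a = 0 := by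
  have h1 : finrank ℂ (LinearMap.range φ) ≤ 1 := by
    simpa using (LinearMap.range φ).finrank_le
  have h2 := LinearMap.finrank_range_add_finrank_ker φ
  have hk : 0 < finrank ℂ (LinearMap.ker φ) := by omega
  have := Submodule.exists_mem_ne_zero_of_ne_bot (p := LinearMap.ker φ)
    (by intro h; rw [h, finrank_bot] at hk; omega)
  obtain ⟨a, ha, ha0⟩ := this
  exact ⟨a, ha0, ha⟩

lemma aux_ker2 {V : Type*} [AddCommGroup V] [Module ℂ V] [FiniteDimensional ℂ V]
    (hV : 3 ≤ finrank ℂ V) (φ ψ : V →ₗ[ℂ] ℂ) :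
    ∃ a : V, a ≠ 0 ∧ φ a = 0 ∧ ψ a = 0 := by
  have h1 : finrank ℂ (LinearMap.range φ) ≤ 1 := by
    simpa using (LinearMap.range φ).finrank_le
  have h1' : finrank ℂ (LinearMap.range ψ) ≤ 1 := by
    simpa using (LinearMap.range ψ).finrank_le
  have h2 := LinearMap.finrank_range_add_finrank_ker φ
  have h2' := LinearMap.finrank_range_add_finrank_ker ψ
  have hsup := Submodule.finrank_sup_add_finrank_inf_eq (LinearMap.ker φ) (LinearMap.ker ψ)
  have hsle : finrank ℂ ↥(LinearMap.ker φ ⊔ LinearMap.ker ψ) ≤ finrank ℂ V :=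
    Submodule.finrank_le _
  have hk : 0 < finrank ℂ ↥(LinearMap.ker φ ⊓ LinearMap.ker ψ) := by omega
  obtain ⟨a, ha, ha0⟩ := Submodule.exists_mem_ne_zero_of_ne_bot
    (p := LinearMap.ker φ ⊓ LinearMap.ker ψ)
    (by intro h; rw [h, finrank_bot] at hk; omega)
  exact ⟨a, ha0, ha.1, ha.2⟩

lemma aux_main {V W : Type*} [AddCommGroup V] [Module ℂ V] [FiniteDimensional ℂ V]
    [AddCommGroup W] [Module ℂ W] [FiniteDimensional ℂ W]
    (hV : 2 ≤ finrank ℂ V) (hW : 2 ≤ finrank ℂ W)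
    (T₁ T₂ : W →ₗ[ℂ] Module.Dual ℂ V) :
    ∃ b : W, b ≠ 0 ∧ ∃ a : V, a ≠ 0 ∧ T₁ b a = 0 ∧ T₂ b a = 0 := by
  by_cases h3 : 3 ≤ finrank ℂ V
  · have : Nontrivial W := by
      exact Module.nontrivial_of_finrank_pos (R := ℂ) (by omega)
    obtain ⟨b, hb⟩ := exists_ne (0 : W)
    obtain ⟨a, ha, h1, h2⟩ := aux_ker2 h3 (T₁ b) (T₂ b)
    exact ⟨b, hb, a, ha, h1, h2⟩
  · have hV2 : finrank ℂ V = 2 := by omega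
    by_cases hker : ∃ b : W, b ≠ 0 ∧ T₁ b = 0
    · obtain ⟨b, hb, h0⟩ := hker
      obtain ⟨a, ha, h2⟩ := aux_ker hV (T₂ b)
      exact ⟨b, hb, a, ha, by rw [h0]; rfl, h2⟩
    · push_neg at hker
      have hinj : Function.Injective T₁ := by
        rw [← LinearMap.ker_eq_bot, Submodule.eq_bot_iff]
        intro b hb
        by_contra hb0
        exact hker b hb0 hb
      have hdual : finrank ℂ (Module.Dual ℂ V) = 2 := by
        rw [Subspace.dual_finrank_eq]; exact hV2
      have hW2 : finrank ℂ W = 2 := by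
        have := LinearMap.finrank_le_finrank_of_injective hinj
        omega
      have hrk : finrank ℂ W = finrank ℂ (Module.Dual ℂ V) := by omega
      set e := T₁.linearEquivOfInjective hinj hrk with he
      have : Nontrivial W := nontrivial_of_finrank_pos (R := ℂ) (by omega)
      set L : Module.End ℂ W := (e.symm : Module.Dual ℂ V →ₗ[ℂ] W) ∘ₗ T₂ with hL
      obtain ⟨μ, hμ⟩ := Module.End.exists_eigenvalue L
      obtain ⟨b, hbL⟩ := hμ.exists_hasEigenvector
      have hb0 : b ≠ 0 := hbL.right
      have hTb : T₂ b = μ • T₁ b := by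
        have h1 : L b = μ • b := hbL.apply_eq_smul
        have : e.symm (T₂ b) = μ • b := h1
        have h2 : T₂ b = e (μ • b) := by
          rw [← this]; simp
        rw [h2, map_smul]
        congr 1
      obtain ⟨a, ha, h1⟩ := aux_ker hV (T₁ b)
      refine ⟨b, hb0, a, ha, h1, ?_⟩
      rw [hTb]
      simp [h1]

lemma tmul_ne_zero' {HA HB : Type*}
    [NormedAddCommGroup HA] [InnerProductSpace ℂ HA]
    [NormedAddCommGroup HB] [InnerProductSpace ℂ HB]
    {a : HA} {b : HB} (ha : a ≠ 0) (hb : b ≠ 0) : a ⊗ₜ[ℂ] b ≠ 0 := by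
  set f : HA →ₗ[ℂ] ℂ := (innerSL ℂ a).toLinearMap with hf
  set L : TensorProduct ℂ HA HB →ₗ[ℂ] HB :=
    TensorProduct.lift ((LinearMap.lsmul ℂ HB) ∘ₗ f) with hLdef
  intro h
  have : L (a ⊗ₜ[ℂ] b) = 0 := by rw [h]; simp
  rw [hLdef] at this
  simp only [TensorProduct.lift.tmul, LinearMap.comp_apply, LinearMap.lsmul_apply] at this
  have hfa : f a ≠ 0 := by
    simpa [hf] using (inner_self_ne_zero (𝕜 := ℂ)).mpr ha
  rcases smul_eq_zero.mp this with h' | h'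
  · exact hfa h'
  · exact hb h'

/-- For finite-dimensional complex inner product spaces `H_A, H_B` with
`dim H_A ≥ 2` and `dim H_B ≥ 2`, every linear subspace `K` of `H_A ⊗ H_B` with
`dim K ≥ dim H_A · dim H_B − 2` contains a nonzero product vector. -/
theorem stmt_17 {HA HB : Type*}
    [NormedAddCommGroup HA] [InnerProductSpace ℂ HA] [FiniteDimensional ℂ HA]
    [NormedAddCommGroup HB] [InnerProductSpace ℂ HB] [FiniteDimensional ℂ HB]
    (hdA : 2 ≤ Module.finrank ℂ HA) (hdB : 2 ≤ Module.finrank ℂ HB)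
    (K : Submodule ℂ (TensorProduct ℂ HA HB))
    (hK : Module.finrank ℂ HA * Module.finrank ℂ HB - 2 ≤ Module.finrank ℂ K) :
    ∃ ψ ∈ K, ψ ≠ 0 ∧ ∃ (a : HA) (b : HB), ψ = a ⊗ₜ[ℂ] b := by
  classical
  have hT : finrank ℂ (TensorProduct ℂ HA HB) = finrank ℂ HA * finrank ℂ HB :=
    Module.finrank_tensorProduct
  have hq := Submodule.finrank_quotient_add_finrank K
  have hprod : 4 ≤ finrank ℂ HA * finrank ℂ HB := by nlinarith
  set m := finrank ℂ (TensorProduct ℂ HA HB ⧸ K) with hmdef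
  have hm : m ≤ 2 := by omega
  set bb := Module.finBasis ℂ (TensorProduct ℂ HA HB ⧸ K) with hbb
  set g : TensorProduct ℂ HA HB →ₗ[ℂ] (Fin m → ℂ) :=
    bb.equivFun.toLinearMap ∘ₗ K.mkQ with hgdef
  have hg : ∀ x, (∀ i, g x i = 0) → x ∈ K := by
    intro x hx
    have h0 : g x = 0 := funext hx
    have : bb.equivFun (K.mkQ x) = 0 := h0
    have h1 : K.mkQ x = 0 := by
      have h2 : bb.equivFun (K.mkQ x) = bb.equivFun 0 := by simpa using this
      exact bb.equivFun.injective h2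
    rwa [Submodule.mkQ_apply, Submodule.Quotient.mk_eq_zero] at h1
  set φ : Fin 2 → (Module.Dual ℂ (TensorProduct ℂ HA HB)) :=
    fun i => if h : (i : ℕ) < m then (LinearMap.proj (⟨i, h⟩ : Fin m)) ∘ₗ g else 0 with hφdef
  obtain ⟨b, hb, a, ha, h1, h2⟩ := aux_main hdA hdB
    (TensorProduct.curry (φ 0)).flip (TensorProduct.curry (φ 1)).flip
  have hval : ∀ i : Fin 2, φ i (a ⊗ₜ[ℂ] b) = 0 := by
    intro i
    fin_cases i
    · simpa [TensorProduct.curry_apply, LinearMap.flip_apply] using h1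
    · simpa [TensorProduct.curry_apply, LinearMap.flip_apply] using h2
  have hmem : a ⊗ₜ[ℂ] b ∈ K := by
    apply hg
    intro i
    have hi2 : (i : ℕ) < 2 := lt_of_lt_of_le i.isLt hm
    have := hval ⟨i, hi2⟩
    rw [hφdef] at this
    simp only [dif_pos i.isLt] at this
    simpa using this
  exact ⟨a ⊗ₜ[ℂ] b, hmem, tmul_ne_zero' ha hb, a, b, rfl⟩
end
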